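/- For a plane curve parametrized as (x, x^γ) with p1 = -y'''/(3y''), p2 = p3 = 0, the projective curvature κ = Θ8³/Θ3⁸ equals 3⁹ (1 + γ² − γ)³ / ((γ−2)²(2γ−1)²(γ+1)²) for γ ∉ {0, 1, −1, 2, 1/2}. -/

import Mathlib

/-! For `y = x ^ γ` one gets `p₁ = a / x` with `a = (2 - γ) / 3`. Each of `P₂`, `P₃`, `Θ₃`, `Θ₈` is
a differential polynomial in `p₁` that is homogeneous of weight `2, 3, 3, 8` (with `p₁` of weight
`1`), so it is a constant multiple of the corresponding power of `1 / x`: with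
`b = a (a - 1) (2a - 1)` one finds `Θ₃ = b x⁻³` and `Θ₈ = 9 (3a² - 3a + 1) b² x⁻⁸`. Hence
`κ = 3⁶ (3a² - 3a + 1)³ / b²` is independent of `x`, and substituting `a` gives the formula. -/

/-- Wilczynski coefficient `p₁ = −y'''/(3y'')` for a curve `y = y(x)` (with `p₂ = p₃ = 0`). -/
noncomputable def p1f (y : ℝ → ℝ) : ℝ → ℝ :=
  fun x => -(iteratedDeriv 3 y x) / (3 * iteratedDeriv 2 y x)

/-- Semi-invariant `P₂ = −p₁² − p₁'`. -/
noncomputable def P2f (y : ℝ → ℝ) : ℝ → ℝ :=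
  fun x => -(p1f y x) ^ 2 - deriv (p1f y) x

/-- Semi-invariant `P₃ = 2p₁³ − p₁''`. -/
noncomputable def P3f (y : ℝ → ℝ) : ℝ → ℝ :=
  fun x => 2 * (p1f y x) ^ 3 - iteratedDeriv 2 (p1f y) x

/-- Relative invariant `Θ₃ = P₃ − (3/2)P₂'`. -/
noncomputable def Theta3f (y : ℝ → ℝ) : ℝ → ℝ :=
  fun x => P3f y x - (3 / 2) * deriv (P2f y) x

/-- Relative invariant `Θ₈ = 6Θ₃Θ₃'' − 7(Θ₃')² − 27P₂Θ₃²`. -/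
noncomputable def Theta8f (y : ℝ → ℝ) : ℝ → ℝ :=
  fun x => 6 * Theta3f y x * iteratedDeriv 2 (Theta3f y) x
    - 7 * (deriv (Theta3f y) x) ^ 2 - 27 * P2f y x * (Theta3f y x) ^ 2

open Set

section ZPow

variable {𝕜 : Type*} [NontriviallyNormedField 𝕜] {f : 𝕜 → 𝕜} {s : Set 𝕜} {c : 𝕜} {m : ℤ}

theorem Set.EqOn.iteratedDeriv_const_mul_zpow (h : EqOn f (fun x => c * x ^ m) s)
    (hs : IsOpen s) (n : ℕ) :
    EqOn (iteratedDeriv n f)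
      (fun x => c * (∏ i ∈ Finset.range n, ((m : 𝕜) - i)) * x ^ (m - n)) s := by
  refine (h.iteratedDeriv_of_isOpen hs n).trans fun x _ => ?_
  simp only [iteratedDeriv_const_mul_field, iteratedDeriv_eq_iterate, iter_deriv_zpow, mul_assoc]

theorem Set.EqOn.deriv_const_mul_zpow (h : EqOn f (fun x => c * x ^ m) s) (hs : IsOpen s) :
    EqOn (_root_.deriv f) (fun x => c * m * x ^ (m - 1)) s := by
  simpa [iteratedDeriv_one] using h.iteratedDeriv_const_mul_zpow hs 1

end ZPow

section Invariants

variable {y : ℝ → ℝ} {s : Set ℝ} {a : ℝ}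

theorem P2f_eqOn (hs : IsOpen s) (hp : EqOn (p1f y) (fun x => a * x ^ (-1 : ℤ)) s) :
    EqOn (P2f y) (fun x => (a - a ^ 2) * x ^ (-2 : ℤ)) s := by
  intro x hx
  simp only [P2f, hp hx, hp.deriv_const_mul_zpow hs hx]
  norm_num [zpow_neg, zpow_ofNat]
  ring

theorem P3f_eqOn (hs : IsOpen s) (hp : EqOn (p1f y) (fun x => a * x ^ (-1 : ℤ)) s) :
    EqOn (P3f y) (fun x => (2 * a ^ 3 - 2 * a) * x ^ (-3 : ℤ)) s := by
  intro x hx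
  simp only [P3f, hp hx, hp.iteratedDeriv_const_mul_zpow hs 2 hx, Finset.prod_range_succ]
  norm_num [zpow_neg, zpow_ofNat]
  ring

theorem Theta3f_eqOn (hs : IsOpen s) (hp : EqOn (p1f y) (fun x => a * x ^ (-1 : ℤ)) s) :
    EqOn (Theta3f y) (fun x => a * (a - 1) * (2 * a - 1) * x ^ (-3 : ℤ)) s := by
  intro x hx
  simp only [Theta3f, P3f_eqOn hs hp hx, (P2f_eqOn hs hp).deriv_const_mul_zpow hs hx]
  norm_num [zpow_neg, zpow_ofNat]
  ring

theorem Theta8f_eqOn (hs : IsOpen s) (hp : EqOn (p1f y) (fun x => a * x ^ (-1 : ℤ)) s) :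
    EqOn (Theta8f y)
      (fun x => (a * (a - 1) * (2 * a - 1)) ^ 2 * (9 * (3 * a ^ 2 - 3 * a + 1)) * x ^ (-8 : ℤ))
      s := by
  intro x hx
  have hΘ := Theta3f_eqOn hs hp
  simp only [Theta8f, hΘ hx, hΘ.deriv_const_mul_zpow hs hx,
    hΘ.iteratedDeriv_const_mul_zpow hs 2 hx, P2f_eqOn hs hp hx, Finset.prod_range_succ]
  norm_num [zpow_neg, zpow_ofNat]
  ring

end Invariants

theorem p1f_rpow_eqOn {γ : ℝ} (h0 : γ ≠ 0) (h1 : γ ≠ 1) :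
    EqOn (p1f fun x => x ^ γ) (fun x => (2 - γ) / 3 * x ^ (-1 : ℤ)) (Ioi 0) := by
  intro x (hx : 0 < x)
  have hpow : x ^ (γ - 3) = x ^ (γ - 2) / x := by
    rw [← Real.rpow_sub_one hx.ne']
    ring_nf
  simp only [p1f, iteratedDeriv_eq_iterate, Real.iter_deriv_rpow_const]
  simp [descPochhammer_succ_right, hpow]
  field_simp
  ring

theorem projective_curvature_of_p1f_eqOn {y : ℝ → ℝ} {s : Set ℝ} {a x : ℝ} (hs : IsOpen s)
    (hp : EqOn (p1f y) (fun x => a * x ^ (-1 : ℤ)) s) (hx : x ∈ s) (hx0 : x ≠ 0) :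
    Theta8f y x ^ 3 / Theta3f y x ^ 8 =
      (9 * (3 * a ^ 2 - 3 * a + 1)) ^ 3 / (a * (a - 1) * (2 * a - 1)) ^ 2 := by
  rw [Theta8f_eqOn hs hp hx, Theta3f_eqOn hs hp hx]
  generalize a * (a - 1) * (2 * a - 1) = b
  rcases eq_or_ne b 0 with rfl | hb
  · -- `Θ₃` vanishes and both sides are junk `_ / 0 = 0`
    simp
  · simp only [zpow_neg, zpow_ofNat]
    field_simp

theorem projective_curvature_power_curve_general (γ : ℝ)
    (h0 : γ ≠ 0) (h1 : γ ≠ 1)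
    (x : ℝ) (hx : 0 < x) :
    (Theta8f (fun x : ℝ => x ^ γ) x) ^ 3 / (Theta3f (fun x : ℝ => x ^ γ) x) ^ 8 =
      3 ^ 9 * (1 + γ ^ 2 - γ) ^ 3 /
        ((γ - 2) ^ 2 * (2 * γ - 1) ^ 2 * (γ + 1) ^ 2) := by
  set a := (2 - γ) / 3
  have hk : 9 * (3 * a ^ 2 - 3 * a + 1) = 3 * (1 + γ ^ 2 - γ) := by ring
  have hb : (a * (a - 1) * (2 * a - 1)) ^ 2 =
      ((γ - 2) ^ 2 * (2 * γ - 1) ^ 2 * (γ + 1) ^ 2) / 3 ^ 6 := by ring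
  rw [projective_curvature_of_p1f_eqOn isOpen_Ioi (p1f_rpow_eqOn h0 h1) hx hx.ne', hk, hb,
    div_div_eq_mul_div]
  ring

/-- The projective curvature `κ = Θ₈³/Θ₃⁸` of the curve `y = x^γ` equals
`3⁹(1 + γ² − γ)³ / ((γ−2)²(2γ−1)²(γ+1)²)`. -/
theorem projective_curvature_power_curve (γ : ℝ)
    (h0 : γ ≠ 0) (h1 : γ ≠ 1) (hm1 : γ ≠ -1) (h2 : γ ≠ 2) (hh : γ ≠ 1 / 2)
    (x : ℝ) (hx : 0 < x) :
    (Theta8f (fun x : ℝ => x ^ γ) x) ^ 3 / (Theta3f (fun x : ℝ => x ^ γ) x) ^ 8 =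
      3 ^ 9 * (1 + γ ^ 2 - γ) ^ 3 /
        ((γ - 2) ^ 2 * (2 * γ - 1) ^ 2 * (γ + 1) ^ 2) :=
  projective_curvature_power_curve_general γ h0 h1 x hx
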